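/- arXiv:1907.07716 — 2 statements merged into one kernel-verified Lean document; each statement's English description precedes it below -/
import Mathlib

section
/- Let Q be a finite connected non-simple locally strictly simple quandle. Then every proper subquandle of Q is isomorphic either to a block [a]_α or to the quotient Q/α for some congruence α of Q. -/
/-!  Basic theory of quandles: structures, subquandles, congruences,
quotients, displacement groups, affine and principal quandles. -/

universe u v

/-- A quandle structure on a set `Q`: a binary operation whose left
translations are bijective, which is left self-distributive and idempotent. -/
structure QuandleStruct (Q : Type*) where
  act : Q → Q → Q
  act_bijective : ∀ a, Function.Bijective (act a)
  self_distrib : ∀ a b c, act a (act b c) = act (act a b) (act a c)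
  act_idem : ∀ a, act a a = a

namespace QuandleStruct

variable {Q : Type*} {R : Type*}

/-- The left translation `L_a` as a permutation of `Q`. -/
noncomputable def L (S : QuandleStruct Q) (a : Q) : Equiv.Perm Q :=
  Equiv.ofBijective (S.act a) (S.act_bijective a)

@[simp] lemma L_apply (S : QuandleStruct Q) (a b : Q) : S.L a b = S.act a b := rfl

/-- Left division `a \ b`. -/
noncomputable def ldiv (S : QuandleStruct Q) (a b : Q) : Q := (S.L a).symm b

@[simp] lemma ldiv_act (S : QuandleStruct Q) (a b : Q) : S.ldiv a (S.act a b) = b :=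
  (S.L a).symm_apply_apply b

@[simp] lemma act_ldiv (S : QuandleStruct Q) (a b : Q) : S.act a (S.ldiv a b) = b :=
  (S.L a).apply_symm_apply b

/-- The displacement group `Dis(Q)`, generated by all `L_a ∘ L_b⁻¹`. -/
def Dis (S : QuandleStruct Q) : Subgroup (Equiv.Perm Q) :=
  Subgroup.closure {g | ∃ a b, g = S.L a * (S.L b)⁻¹}

/-- A quandle is connected if its displacement group acts transitively. -/
def Connected (S : QuandleStruct Q) : Prop := ∀ x y : Q, ∃ g ∈ S.Dis, g x = y

/-- A quandle is faithful if `a ↦ L_a` is injective. -/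
def Faithful (S : QuandleStruct Q) : Prop := Function.Injective S.L

/-- A quandle is latin if all right translations are bijective. -/
def Latin (S : QuandleStruct Q) : Prop := ∀ a : Q, Function.Bijective (fun b => S.act b a)

/-- A subquandle: a nonempty subset closed under the operation and left division. -/
def IsSubquandle (S : QuandleStruct Q) (s : Set Q) : Prop :=
  s.Nonempty ∧ ∀ a ∈ s, ∀ b ∈ s, S.act a b ∈ s ∧ S.ldiv a b ∈ s

/-- The quandle structure induced on a subquandle. -/
def restrict (S : QuandleStruct Q) (s : Set Q) (hs : S.IsSubquandle s) :
    QuandleStruct s where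
  act a b := ⟨S.act a.1 b.1, (hs.2 a.1 a.2 b.1 b.2).1⟩
  act_bijective a := by
    constructor
    · intro x y h
      exact Subtype.ext ((S.act_bijective a.1).1 (congrArg Subtype.val h))
    · intro b
      refine ⟨⟨S.ldiv a.1 b.1, (hs.2 a.1 a.2 b.1 b.2).2⟩, Subtype.ext ?_⟩
      exact S.act_ldiv a.1 b.1
  self_distrib a b c := Subtype.ext (S.self_distrib a.1 b.1 c.1)
  act_idem a := Subtype.ext (S.act_idem a.1)

/-- A quandle (with more than one element) is strictly simple if it has no
proper subquandle. -/
def StrictlySimple (S : QuandleStruct Q) : Prop :=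
  Nontrivial Q ∧ ∀ s : Set Q, S.IsSubquandle s → s.Nontrivial → s = Set.univ

/-- A quandle is locally strictly simple (LSS) if every proper subquandle is
strictly simple. -/
def LSS (S : QuandleStruct Q) : Prop :=
  ∀ (s : Set Q) (hs : S.IsSubquandle s), s.Nontrivial → s ≠ Set.univ →
    StrictlySimple (S.restrict s hs)

/-- A congruence of a quandle: an equivalence relation compatible with the
operation and with left division. -/
structure IsCongruence (S : QuandleStruct Q) (r : Q → Q → Prop) : Prop where
  equiv : Equivalence r
  act_comp : ∀ {a b c d}, r a b → r c d → r (S.act a c) (S.act b d)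
  ldiv_comp : ∀ {a b c d}, r a b → r c d → r (S.ldiv a c) (S.ldiv b d)

/-- The setoid attached to a congruence. -/
def IsCongruence.setoid {S : QuandleStruct Q} {r : Q → Q → Prop}
    (hr : S.IsCongruence r) : Setoid Q := ⟨r, hr.equiv⟩

/-- The quotient quandle `Q/α`. -/
def quot (S : QuandleStruct Q) {r : Q → Q → Prop} (hr : S.IsCongruence r) :
    QuandleStruct (Quotient hr.setoid) where
  act := Quotient.map₂ S.act fun _ _ h1 _ _ h2 => hr.act_comp h1 h2
  act_bijective := by
    intro a
    induction a using Quotient.ind with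
    | _ a =>
    constructor
    · intro x y
      induction x using Quotient.ind with
      | _ x =>
      induction y using Quotient.ind with
      | _ y =>
      intro h
      have h1 : r (S.act a x) (S.act a y) := Quotient.exact h
      have h2 := hr.ldiv_comp (hr.equiv.refl a) h1
      rw [S.ldiv_act, S.ldiv_act] at h2
      exact Quotient.sound h2
    · intro b
      induction b using Quotient.ind with
      | _ b =>
      exact ⟨Quotient.mk _ (S.ldiv a b), congrArg (Quotient.mk _) (S.act_ldiv a b)⟩
  self_distrib := by
    intro a b c
    induction a using Quotient.ind with
    | _ a =>
    induction b using Quotient.ind with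
    | _ b =>
    induction c using Quotient.ind with
    | _ c =>
    exact congrArg (Quotient.mk _) (S.self_distrib a b c)
  act_idem := by
    intro a
    induction a using Quotient.ind with
    | _ a =>
    exact congrArg (Quotient.mk _) (S.act_idem a)

/-- The congruence block `[a]_α` is a subquandle. -/
lemma block_isSubquandle (S : QuandleStruct Q) {r : Q → Q → Prop}
    (hr : S.IsCongruence r) (a : Q) : S.IsSubquandle {b | r a b} := by
  refine ⟨⟨a, hr.equiv.refl a⟩, fun x hx y hy => ⟨?_, ?_⟩⟩
  · have h := hr.act_comp hx hy
    rwa [S.act_idem] at h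
  · have h := hr.ldiv_comp hx hy
    have ha : S.ldiv a a = a := by
      have h2 := S.ldiv_act a a
      rwa [S.act_idem] at h2
    rwa [ha] at h

/-- A quandle is simple if its only congruences are `0_Q` (equality) and
`1_Q` (the full relation). -/
def Simple (S : QuandleStruct Q) : Prop :=
  ∀ r : Q → Q → Prop, S.IsCongruence r →
    r = (fun a b : Q => a = b) ∨ r = (fun _ _ : Q => True)

/-- A quandle is subdirectly irreducible if the intersection of all congruences
different from `0_Q` is different from `0_Q`. -/
def SubdirectlyIrreducible (S : QuandleStruct Q) : Prop :=
  ∃ a b : Q, a ≠ b ∧ ∀ r : Q → Q → Prop, S.IsCongruence r →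
    r ≠ (fun a b : Q => a = b) → r a b

/-- Isomorphism of quandles. -/
def QIso (S : QuandleStruct Q) (T : QuandleStruct R) : Prop :=
  ∃ e : Q ≃ R, ∀ a b, e (S.act a b) = T.act (e a) (e b)

/-- The relation `σ_Q` : two elements are related iff their point stabilizers
in the displacement group coincide. -/
def sigmaRel (S : QuandleStruct Q) (a b : Q) : Prop :=
  ∀ g ∈ S.Dis, (g a = a ↔ g b = b)

/-- The displacement group relative to a relation `r`. -/
def DisRel (S : QuandleStruct Q) (r : Q → Q → Prop) : Subgroup (Equiv.Perm Q) :=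
  Subgroup.closure {g | ∃ a b, r a b ∧ g = S.L a * (S.L b)⁻¹}

/-- The direct product of two quandles. -/
def prod (S : QuandleStruct Q) (T : QuandleStruct R) : QuandleStruct (Q × R) where
  act a b := (S.act a.1 b.1, T.act a.2 b.2)
  act_bijective a := by
    show Function.Bijective (Prod.map (S.act a.1) (T.act a.2))
    exact (S.act_bijective a.1).prodMap (T.act_bijective a.2)
  self_distrib a b c := Prod.ext (S.self_distrib a.1 b.1 c.1) (T.self_distrib a.2 b.2 c.2)
  act_idem a := Prod.ext (S.act_idem a.1) (T.act_idem a.2)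

end QuandleStruct

/-- The affine quandle `Aff(A, f)` over an abelian group `A` with
`a * b = (1 - f)(a) + f(b)`. -/
def affineQuandle (A : Type*) [AddCommGroup A] (f : A ≃+ A) : QuandleStruct A where
  act a b := a - f a + f b
  act_bijective a := by
    show Function.Bijective ((fun x : A => a - f a + x) ∘ f)
    exact (Equiv.addLeft (a - f a)).bijective.comp f.bijective
  self_distrib a b c := by
    simp only [map_add, map_sub]
    abel
  act_idem a := by simp

/-- Data for an affine quandle: a finite abelian group together with an
automorphism. -/
structure AffineData : Type 1 where
  carrier : Type
  [grp : AddCommGroup carrier]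
  [fin : Finite carrier]
  equivAdd : carrier ≃+ carrier

attribute [instance] AffineData.grp AffineData.fin

namespace QuandleStruct

/-- A quandle is affine if it is isomorphic to `Aff(A, f)` for some finite
abelian group `A` and automorphism `f`. -/
def IsAffine {Q : Type*} (S : QuandleStruct Q) : Prop :=
  ∃ D : AffineData, S.QIso (affineQuandle D.carrier D.equivAdd)

end QuandleStruct

/-- The principal quandle `Q(G, f)` with `a * b = a f(a⁻¹ b)`. -/
def principalQuandle (G : Type*) [Group G] (f : G ≃* G) : QuandleStruct G where
  act a b := a * f (a⁻¹ * b)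
  act_bijective a := by
    show Function.Bijective ((fun x : G => a * x) ∘ (⇑f) ∘ (fun b : G => a⁻¹ * b))
    exact ((Equiv.mulLeft a).bijective.comp f.bijective).comp (Equiv.mulLeft a⁻¹).bijective
  self_distrib a b c := by
    simp only [map_mul, map_inv, mul_inv_rev, inv_inv]
    group
  act_idem a := by simp

/-- An extraspecial `q`-group: a finite `q`-group whose center, derived
subgroup and Frattini subgroup coincide and have order `q`. -/
def IsExtraspecial (q : ℕ) (G : Type*) [Group G] : Prop :=
  Finite G ∧ IsPGroup q G ∧ Subgroup.center G = commutator G ∧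
    commutator G = frattini G ∧ Nat.card (Subgroup.center G) = q

/-- A bundled group. -/
structure GroupData : Type 1 where
  carrier : Type
  [grp : Group carrier]

attribute [instance] GroupData.grp

/-!
Fix a congruence `α` different from `0_Q` and `1_Q`. Its blocks are subquandles, all of the
same size by connectedness, hence proper and nontrivial. The `α`-saturation of a proper
subquandle `s` is again a subquandle. If it is proper, local strict simplicity forces it to
equal `s`, and then any block through a point of `s` lies in `s` and so equals `s`. If the
saturation is all of `Q`, then `s` meets every block, and meets each block only once:
otherwise `s ∩ [a]_α` is a nontrivial subquandle of `[a]_α`, so `[a]_α ⊆ s`, so `s = [a]_α`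
and its saturation would be `[a]_α ≠ Q`. Hence `s` is a transversal of `α` and `s ≅ Q/α`.
-/

namespace QuandleStruct

variable {Q : Type*} {S : QuandleStruct Q} {r : Q → Q → Prop}

def saturation (r : Q → Q → Prop) (s : Set Q) : Set Q := {z | ∃ x ∈ s, r x z}

theorem subset_saturation (hr : Equivalence r) (s : Set Q) : s ⊆ saturation r s :=
  fun z hz => ⟨z, hz, hr.refl z⟩

theorem saturation_block_subset (hr : Equivalence r) (x : Q) :
    saturation r {b | r x b} ⊆ {b | r x b} :=
  fun _ ⟨_, hy, hyz⟩ => hr.trans hy hyz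

namespace IsCongruence

theorem apply_of_mem_Dis (hr : S.IsCongruence r) {g : Equiv.Perm Q} (hg : g ∈ S.Dis)
    {x y : Q} (hxy : r x y) : r (g x) (g y) := by
  let preserving : Subgroup (Equiv.Perm Q) :=
    { carrier := {g | ∀ x y, r x y ↔ r (g x) (g y)}
      one_mem' := fun _ _ => Iff.rfl
      mul_mem' := fun {g h} hg hh x y => (hh x y).trans (hg (h x) (h y))
      inv_mem' := fun {g} hg x y => by simpa using (hg (g⁻¹ x) (g⁻¹ y)).symm }
  have hgen : {g | ∃ a b, g = S.L a * (S.L b)⁻¹} ⊆ (preserving : Set (Equiv.Perm Q)) := by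
    rintro _ ⟨a, b, rfl⟩ x y
    change r x y ↔ r (S.act a (S.ldiv b x)) (S.act a (S.ldiv b y))
    refine ⟨fun h => hr.act_comp (hr.equiv.refl a) (hr.ldiv_comp (hr.equiv.refl b) h),
      fun h => ?_⟩
    have h' := hr.act_comp (hr.equiv.refl b) (hr.ldiv_comp (hr.equiv.refl a) h)
    simpa only [ldiv_act, act_ldiv] using h'
  exact ((Subgroup.closure_le preserving).mpr hgen hg x y).mp hxy

theorem block_nontrivial (hr : S.IsCongruence r) (hconn : S.Connected)
    (hr_ne : r ≠ fun a b => a = b) (x : Q) : {b | r x b}.Nontrivial := by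
  obtain ⟨a, b, hab, hne⟩ : ∃ a b, r a b ∧ a ≠ b := by
    by_contra! h
    exact hr_ne (funext₂ fun a b => propext ⟨h a b, fun hab => hab ▸ hr.equiv.refl a⟩)
  obtain ⟨g, hg, rfl⟩ := hconn a x
  exact ⟨g a, hr.equiv.refl _, g b, hr.apply_of_mem_Dis hg hab, g.injective.ne hne⟩

theorem block_ne_univ (hr : S.IsCongruence r) (hr_ne : r ≠ fun _ _ => True) (x : Q) :
    {b | r x b} ≠ Set.univ := by
  intro h
  refine hr_ne (funext₂ fun c d => propext ⟨fun _ => trivial, fun _ => ?_⟩)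
  exact hr.equiv.trans (hr.equiv.symm (Set.eq_univ_iff_forall.mp h c))
    (Set.eq_univ_iff_forall.mp h d)

theorem saturation_isSubquandle (hr : S.IsCongruence r) {s : Set Q}
    (hs : S.IsSubquandle s) : S.IsSubquandle (saturation r s) := by
  obtain ⟨x, hx⟩ := hs.1
  refine ⟨⟨x, x, hx, hr.equiv.refl x⟩, ?_⟩
  rintro z ⟨y, hy, hyz⟩ w ⟨v, hv, hvw⟩
  exact ⟨⟨_, (hs.2 y hy v hv).1, hr.act_comp hyz hvw⟩,
    ⟨_, (hs.2 y hy v hv).2, hr.ldiv_comp hyz hvw⟩⟩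

theorem qIso_quot_of_transversal (hr : S.IsCongruence r) {s : Set Q}
    (hs : S.IsSubquandle s)
    (hinj : ∀ x ∈ s, ∀ y ∈ s, r x y → x = y) (hsurj : saturation r s = Set.univ) :
    (S.restrict s hs).QIso (S.quot hr) := by
  have hbij : Function.Bijective fun x : s => Quotient.mk hr.setoid x.1 := by
    refine ⟨fun x y h => Subtype.ext (hinj x.1 x.2 y.1 y.2 (Quotient.exact h)), fun q => ?_⟩
    induction q using Quotient.ind with
    | _ q =>
      obtain ⟨x, hx, hxq⟩ := hsurj ▸ Set.mem_univ q
      exact ⟨⟨x, hx⟩, Quotient.sound hxq⟩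
  exact ⟨Equiv.ofBijective _ hbij, fun _ _ => rfl⟩

end IsCongruence

theorem IsSubquandle.inter {s t : Set Q} (hs : S.IsSubquandle s) (ht : S.IsSubquandle t)
    (hst : (s ∩ t).Nonempty) : S.IsSubquandle (s ∩ t) :=
  ⟨hst, fun a ha b hb => ⟨⟨(hs.2 a ha.1 b hb.1).1, (ht.2 a ha.2 b hb.2).1⟩,
    ⟨(hs.2 a ha.1 b hb.1).2, (ht.2 a ha.2 b hb.2).2⟩⟩⟩

theorem restrict_ldiv_val {p : Set Q} (hp : S.IsSubquandle p) (a b : p) :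
    ((S.restrict p hp).ldiv a b).1 = S.ldiv a.1 b.1 := by
  apply (S.act_bijective a.1).1
  change ((S.restrict p hp).act a ((S.restrict p hp).ldiv a b)).1 = _
  rw [act_ldiv, act_ldiv]

theorem IsSubquandle.preimage_val {p u : Set Q} (hu : S.IsSubquandle u)
    (hp : S.IsSubquandle p) (hup : u ⊆ p) :
    (S.restrict p hp).IsSubquandle (Subtype.val ⁻¹' u) := by
  obtain ⟨x, hx⟩ := hu.1
  refine ⟨⟨⟨x, hup hx⟩, hx⟩, fun a ha b hb => ⟨(hu.2 a ha b hb).1, ?_⟩⟩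
  rw [Set.mem_preimage, restrict_ldiv_val]
  exact (hu.2 a ha b hb).2

theorem LSS.eq_of_subset (hlss : S.LSS) {p u : Set Q} (hp : S.IsSubquandle p)
    (hp_nt : p.Nontrivial) (hp_ne : p ≠ Set.univ) (hu : S.IsSubquandle u)
    (hu_nt : u.Nontrivial) (hup : u ⊆ p) : u = p := by
  have hpre_nt : (Subtype.val ⁻¹' u : Set p).Nontrivial := by
    obtain ⟨x, hx, y, hy, hxy⟩ := hu_nt
    exact ⟨⟨x, hup hx⟩, hx, ⟨y, hup hy⟩, hy, fun h => hxy (congrArg Subtype.val h)⟩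
  have hpre := (hlss p hp hp_nt hp_ne).2 _ (hu.preimage_val hp hup) hpre_nt
  refine hup.antisymm fun z hz => ?_
  change (⟨z, hz⟩ : p) ∈ Subtype.val ⁻¹' u
  exact hpre ▸ Set.mem_univ _

theorem LSS.block_eq_of_rel (hlss : S.LSS) (hr : S.IsCongruence r) {s : Set Q}
    (hs : S.IsSubquandle s) (hs_nt : s.Nontrivial) (hs_ne : s ≠ Set.univ) {x y : Q}
    (hx : x ∈ s) (hy : y ∈ s) (hxy : r x y) (hne : x ≠ y)
    (hblock_ne : {b | r x b} ≠ Set.univ) : {b | r x b} = s := by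
  have hblock := S.block_isSubquandle hr x
  have hinter_nt : (s ∩ {b | r x b}).Nontrivial :=
    ⟨x, ⟨hx, hr.equiv.refl x⟩, y, ⟨hy, hxy⟩, hne⟩
  have hinter := hlss.eq_of_subset hblock (hinter_nt.mono Set.inter_subset_right) hblock_ne
    (hs.inter hblock hinter_nt.nonempty) hinter_nt Set.inter_subset_right
  exact hlss.eq_of_subset hs hs_nt hs_ne hblock (hinter_nt.mono Set.inter_subset_right)
    (hinter ▸ Set.inter_subset_left)

end QuandleStruct

theorem statement9_general {Q : Type u} (S : QuandleStruct Q)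
    (hconn : S.Connected) (hns : ¬ S.Simple) (hlss : S.LSS)
    (s : Set Q) (hs : S.IsSubquandle s) (hnt : s.Nontrivial) (hne : s ≠ Set.univ) :
    ∃ (r : Q → Q → Prop) (hr : S.IsCongruence r),
      (∃ a : Q, (S.restrict s hs).QIso
        (S.restrict {b | r a b} (S.block_isSubquandle hr a))) ∨
      (S.restrict s hs).QIso (S.quot hr) := by
  obtain ⟨r, hr, hr_ne_eq, hr_ne_top⟩ :
      ∃ r, S.IsCongruence r ∧ r ≠ (fun a b => a = b) ∧ r ≠ fun _ _ => True := by
    simpa [QuandleStruct.Simple] using hns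
  have hblock_nt := hr.block_nontrivial hconn hr_ne_eq
  have hblock_ne := hr.block_ne_univ hr_ne_top
  have hs_sat := QuandleStruct.subset_saturation hr.equiv s
  refine ⟨r, hr, ?_⟩
  by_cases hsat : QuandleStruct.saturation r s = Set.univ
  · refine Or.inr (hr.qIso_quot_of_transversal hs (fun x hx y hy hxy => ?_) hsat)
    by_contra hne_xy
    have hblock := hlss.block_eq_of_rel hr hs hnt hne hx hy hxy hne_xy (hblock_ne x)
    refine hblock_ne x (Set.eq_univ_of_univ_subset ?_)
    exact hsat ▸ hblock ▸ QuandleStruct.saturation_block_subset hr.equiv x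
  · obtain ⟨x, hx⟩ := hs.1
    have hsat_eq : s = QuandleStruct.saturation r s :=
      hlss.eq_of_subset (hr.saturation_isSubquandle hs) (hnt.mono hs_sat) hsat hs hnt hs_sat
    have hblock : s = {b | r x b} := (hlss.eq_of_subset hs hnt hne (S.block_isSubquandle hr x)
      (hblock_nt x) fun z hz => hsat_eq ▸ ⟨x, hx, hz⟩).symm
    exact Or.inl ⟨x, Equiv.setCongr hblock, fun _ _ => rfl⟩

/-- In a finite connected non-simple LSS quandle, every proper
subquandle is isomorphic to a block `[a]_α` or to the quotient `Q/α` for some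
congruence `α`. -/
theorem statement9 {Q : Type u} [Finite Q] (S : QuandleStruct Q)
    (hconn : S.Connected) (hns : ¬ S.Simple) (hlss : S.LSS)
    (s : Set Q) (hs : S.IsSubquandle s) (hnt : s.Nontrivial) (hne : s ≠ Set.univ) :
    ∃ (r : Q → Q → Prop) (hr : S.IsCongruence r),
      (∃ a : Q, (S.restrict s hs).QIso
        (S.restrict {b | r a b} (S.block_isSubquandle hr a))) ∨
      (S.restrict s hs).QIso (S.quot hr) :=
  statement9_general S hconn hns hlss s hs hnt hne
end

section
/- Let Q be a finite connected locally strictly simple quandle with more than one element that is subdirectly reducible. Then Q is isomorphic to a direct product M × N of two connected strictly simple quandles M and N. -/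
/-!  Basic theory of quandles: structures, subquandles, congruences,
quotients, displacement groups, affine and principal quandles. -/

universe u v

namespace QuandleStruct

variable {Q : Type*} {R : Type*} {U : Type*}

section Basic

lemma act_left_cancel (S : QuandleStruct Q) {a b c : Q} (h : S.act a b = S.act a c) :
    b = c := (S.act_bijective a).1 h

lemma ldiv_eq_of (S : QuandleStruct Q) {a b c : Q} (h : S.act a c = b) : S.ldiv a b = c := by
  have := congrArg (S.ldiv a) h
  rw [S.ldiv_act] at this
  exact this.symm

lemma ldiv_self (S : QuandleStruct Q) (a : Q) : S.ldiv a a = a :=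
  S.ldiv_eq_of (S.act_idem a)

/-- Homomorphism of quandle structures. -/
def IsHom (S : QuandleStruct Q) (T : QuandleStruct R) (f : Q → R) : Prop :=
  ∀ a b, f (S.act a b) = T.act (f a) (f b)

lemma IsHom.ldiv_map {S : QuandleStruct Q} {T : QuandleStruct R} {f : Q → R}
    (hf : S.IsHom T f) (a b : Q) : f (S.ldiv a b) = T.ldiv (f a) (f b) := by
  symm
  apply T.ldiv_eq_of
  rw [← hf, S.act_ldiv]

end Basic

section Dis

/-- Push forward elements of the displacement group along a homomorphism. -/
lemma dis_pushforward {S : QuandleStruct Q} {T : QuandleStruct R} {f : Q → R}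
    (hf : S.IsHom T f) :
    ∀ g ∈ S.Dis, ∃ g' ∈ T.Dis, ∀ x, f (g x) = g' (f x) := by
  intro g hg
  induction hg using Subgroup.closure_induction with
  | mem g hgen =>
    obtain ⟨a, b, rfl⟩ := hgen
    refine ⟨T.L (f a) * (T.L (f b))⁻¹, Subgroup.subset_closure ⟨f a, f b, rfl⟩, fun x => ?_⟩
    have h1 : ((S.L a * (S.L b)⁻¹) x) = S.act a (S.ldiv b x) := rfl
    have h2 : ((T.L (f a) * (T.L (f b))⁻¹) (f x)) = T.act (f a) (T.ldiv (f b) (f x)) := rfl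
    rw [h1, h2, hf, hf.ldiv_map]
  | one => exact ⟨1, one_mem _, fun x => rfl⟩
  | mul g h hg hh ihg ihh =>
    obtain ⟨g', hg', hgc⟩ := ihg
    obtain ⟨h', hh', hhc⟩ := ihh
    exact ⟨g' * h', mul_mem hg' hh', fun x => by
      simp only [Equiv.Perm.mul_apply]; rw [hgc, hhc]⟩
  | inv g hg ihg =>
    obtain ⟨g', hg', hgc⟩ := ihg
    refine ⟨g'⁻¹, inv_mem hg', fun x => ?_⟩
    have := hgc (g⁻¹ x)
    simp only [← Equiv.Perm.mul_apply, mul_inv_cancel, Equiv.Perm.one_apply] at this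
    rw [this]
    simp

/-- A surjective homomorphic image of a connected quandle is connected. -/
lemma connected_of_surj_hom {S : QuandleStruct Q} {T : QuandleStruct R} {f : Q → R}
    (hf : S.IsHom T f) (hs : Function.Surjective f) (hc : S.Connected) : T.Connected := by
  intro x' y'
  obtain ⟨x, rfl⟩ := hs x'
  obtain ⟨y, rfl⟩ := hs y'
  obtain ⟨g, hg, hgx⟩ := hc x y
  obtain ⟨g', hg', hgc⟩ := dis_pushforward hf g hg
  exact ⟨g', hg', by rw [← hgc, hgx]⟩

/-- Congruences are invariant under the displacement group. -/
lemma cong_iff_dis {S : QuandleStruct Q} {r : Q → Q → Prop} (hr : S.IsCongruence r) :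
    ∀ g ∈ S.Dis, ∀ a b, r a b ↔ r (g a) (g b) := by
  intro g hg
  induction hg using Subgroup.closure_induction with
  | mem g hgen =>
    obtain ⟨a, b, rfl⟩ := hgen
    intro x y
    have h1 : ∀ z, ((S.L a * (S.L b)⁻¹) z) = S.act a (S.ldiv b z) := fun _ => rfl
    rw [h1, h1]
    constructor
    · intro h
      exact hr.act_comp (hr.equiv.refl a) (hr.ldiv_comp (hr.equiv.refl b) h)
    · intro h
      have h2 := hr.ldiv_comp (hr.equiv.refl a) h
      rw [S.ldiv_act, S.ldiv_act] at h2
      have h3 := hr.act_comp (hr.equiv.refl b) h2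
      rw [S.act_ldiv, S.act_ldiv] at h3
      exact h3
  | one => intro a b; rfl
  | mul g h _ _ ihg ihh =>
    intro a b
    rw [ihh a b, ihg (h a) (h b)]
    rfl
  | inv g _ ihg =>
    intro a b
    have := ihg (g⁻¹ a) (g⁻¹ b)
    simp only [← Equiv.Perm.mul_apply, mul_inv_cancel, Equiv.Perm.one_apply] at this
    exact this.symm

/-- In a connected quandle, every block of a nontrivial congruence is nontrivial. -/
lemma block_nontrivial {S : QuandleStruct Q} {r : Q → Q → Prop} (hr : S.IsCongruence r)
    (hconn : S.Connected) (h0 : ∃ x y, r x y ∧ x ≠ y) (a : Q) :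
    ∃ b, b ≠ a ∧ r a b := by
  obtain ⟨x, y, hxy, hne⟩ := h0
  obtain ⟨g, hg, hgx⟩ := hconn x a
  refine ⟨g y, fun h => hne ?_, ?_⟩
  · rw [← hgx] at h
    exact (g.injective h).symm
  · rw [← hgx]
    exact ((cong_iff_dis hr g hg x y).1 hxy)

end Dis

end QuandleStruct
namespace QuandleStruct

variable {Q : Type*} {R : Type*}

section Quot

variable {S : QuandleStruct Q} {r : Q → Q → Prop} (hr : S.IsCongruence r)

lemma quot_mk_hom : S.IsHom (S.quot hr) (Quotient.mk hr.setoid) := by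
  intro a b
  rfl

lemma quot_mk_surjective : Function.Surjective (Quotient.mk hr.setoid) :=
  Quotient.exists_rep

lemma quot_connected (hc : S.Connected) : (S.quot hr).Connected :=
  connected_of_surj_hom (quot_mk_hom hr) (quot_mk_surjective hr) hc

/-- The coercion of a subquandle is a homomorphism. -/
lemma restrict_hom (s : Set Q) (hs : S.IsSubquandle s) :
    (S.restrict s hs).IsHom S (Subtype.val) := fun _ _ => rfl

end Quot

section Exists

/-- Extract a nontrivial pair from a relation different from equality. -/
lemma exists_pair_of_ne_eq {r : Q → Q → Prop} (hrefl : ∀ x, r x x)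
    (h : r ≠ fun a b => a = b) : ∃ x y, r x y ∧ x ≠ y := by
  by_contra hc
  push_neg at hc
  apply h
  funext x y
  apply propext
  exact ⟨fun hxy => hc x y hxy, fun hxy => hxy ▸ hrefl x⟩

lemma ne_eq_of_pair {r : Q → Q → Prop} {x y : Q} (hxy : r x y) (hne : x ≠ y) :
    r ≠ fun a b => a = b := by
  intro h
  exact hne (by rw [h] at hxy; exact hxy)

end Exists

section SS

variable {S : QuandleStruct Q}

/-- Inside any subquandle `s` of `Q` containing the point `a`, the trace of a
congruence block `[a]_r` is a subquandle of the restricted quandle. -/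
lemma block_trace_subquandle {r : Q → Q → Prop} (hr : S.IsCongruence r)
    {s : Set Q} (hs : S.IsSubquandle s) {a : Q} (ha : a ∈ s) :
    (S.restrict s hs).IsSubquandle {x : s | r a x.1} := by
  refine ⟨⟨⟨a, ha⟩, hr.equiv.refl a⟩, ?_⟩
  rintro x hx y hy
  constructor
  · show r a (S.act x.1 y.1)
    have := hr.act_comp hx hy
    rwa [S.act_idem] at this
  · show r a (((S.restrict s hs).ldiv x y).1)
    rw [(restrict_hom s hs).ldiv_map x y]
    have := hr.ldiv_comp hx hy
    rwa [S.ldiv_self] at this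

/-- Key step: if `s` is a subquandle of a connected LSS quandle containing a
congruence block `[a]_r` (with `r` nontrivial) together with a point outside
that block, then `s = Q`. -/
lemma subquandle_eq_univ_of_block {r : Q → Q → Prop} (hr : S.IsCongruence r)
    (hconn : S.Connected) (hlss : S.LSS)
    (h0 : ∃ x y, r x y ∧ x ≠ y)
    {s : Set Q} (hs : S.IsSubquandle s) {a b : Q} (ha : a ∈ s) (hb : b ∈ s)
    (hblock : ∀ x, r a x → x ∈ s) (hab : ¬ r a b) : s = Set.univ := by
  by_contra hne
  have hsnt : s.Nontrivial := by
    refine ⟨a, ha, b, hb, ?_⟩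
    intro h
    exact hab (h ▸ hr.equiv.refl a)
  have hss := hlss s hs hsnt hne
  have h2 := hss.2 {x : s | r a x.1} (block_trace_subquandle hr hs ha) ?_
  · have : (⟨b, hb⟩ : s) ∈ ({x : s | r a x.1}) := by
      rw [h2]; trivial
    exact hab this
  · obtain ⟨c, hc, hrac⟩ := block_nontrivial hr hconn h0 a
    refine ⟨⟨c, hblock c hrac⟩, hrac, ⟨a, ha⟩, hr.equiv.refl a, ?_⟩
    intro h
    exact hc (congrArg Subtype.val h)

end SS

end QuandleStruct
namespace QuandleStruct

variable {Q : Type*} {R : Type*}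

section QuotSS

variable {S : QuandleStruct Q} {r : Q → Q → Prop}

/-- The quotient of a finite connected LSS quandle by a proper nontrivial
congruence is strictly simple. -/
lemma quot_strictlySimple (hr : S.IsCongruence r) (hconn : S.Connected) (hlss : S.LSS)
    (h0 : r ≠ fun a b => a = b) (h1 : r ≠ fun _ _ => True) :
    StrictlySimple (S.quot hr) := by
  obtain ⟨u, v, huv⟩ : ∃ u v : Q, ¬ r u v := by
    by_contra hc
    push_neg at hc
    exact h1 (funext fun u => funext fun v => propext ⟨fun _ => trivial, fun _ => hc u v⟩)
  constructor
  · exact ⟨Quotient.mk hr.setoid u, Quotient.mk hr.setoid v, fun h => huv (Quotient.exact h)⟩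
  intro s hs hsnt
  by_contra hne
  -- pull back to Q
  let P : Set Q := Quotient.mk hr.setoid ⁻¹' s
  obtain ⟨x, hx, y, hy, hxy⟩ := hsnt
  obtain ⟨a, rfl⟩ := quot_mk_surjective hr x
  obtain ⟨b, rfl⟩ := quot_mk_surjective hr y
  have haP : a ∈ P := hx
  have hbP : b ∈ P := hy
  have hPQ : S.IsSubquandle P := by
    refine ⟨⟨a, haP⟩, ?_⟩
    intro c hc d hd
    constructor
    · show Quotient.mk hr.setoid (S.act c d) ∈ s
      rw [quot_mk_hom hr c d]
      exact ((hs.2 _ hc _ hd).1)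
    · show Quotient.mk hr.setoid (S.ldiv c d) ∈ s
      rw [(quot_mk_hom hr).ldiv_map c d]
      exact ((hs.2 _ hc _ hd).2)
  have hPuniv : P = Set.univ := by
    refine subquandle_eq_univ_of_block hr hconn hlss
      (exists_pair_of_ne_eq hr.equiv.refl h0) hPQ haP hbP ?_ ?_
    · intro z hz
      show Quotient.mk hr.setoid z ∈ s
      have : Quotient.mk hr.setoid z = Quotient.mk hr.setoid a := Quotient.sound (hr.equiv.symm hz)
      rw [this]; exact hx
    · intro hab
      exact hxy (Quotient.sound hab)
  apply hne
  rw [Set.eq_univ_iff_forall]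
  intro z
  obtain ⟨c, rfl⟩ := quot_mk_surjective hr z
  have : c ∈ P := hPuniv ▸ Set.mem_univ c
  exact this

end QuotSS

section Surj

variable {S : QuandleStruct Q}

/-- Permutability/surjectivity: for nontrivial congruences `α`, `β` with trivial
intersection on a connected LSS quandle, every `α`-class meets every `β`-class. -/
lemma classes_meet {α β : Q → Q → Prop} (hα : S.IsCongruence α) (hβ : S.IsCongruence β)
    (hconn : S.Connected) (hlss : S.LSS)
    (hα0 : ∃ x y, α x y ∧ x ≠ y) (hβ0 : ∃ x y, β x y ∧ x ≠ y)
    (hmeet : ∀ x y, α x y → β x y → x = y) (x y : Q) :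
    ∃ z, α x z ∧ β y z := by
  set A : Set Q := {z | ∃ b, β y b ∧ α b z} with hA
  have hAsub : S.IsSubquandle A := by
    refine ⟨⟨y, y, hβ.equiv.refl y, hα.equiv.refl y⟩, ?_⟩
    rintro z1 ⟨b1, hb1, hz1⟩ z2 ⟨b2, hb2, hz2⟩
    constructor
    · refine ⟨S.act b1 b2, ?_, hα.act_comp hz1 hz2⟩
      have := hβ.act_comp hb1 hb2
      rwa [S.act_idem] at this
    · refine ⟨S.ldiv b1 b2, ?_, hα.ldiv_comp hz1 hz2⟩
      have := hβ.ldiv_comp hb1 hb2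
      rwa [S.ldiv_self] at this
  have hAuniv : A = Set.univ := by
    obtain ⟨c, hc, hyc⟩ := block_nontrivial hα hconn hα0 y
    refine subquandle_eq_univ_of_block hβ hconn hlss hβ0 hAsub
      (a := y) (b := c) ⟨y, hβ.equiv.refl y, hα.equiv.refl y⟩
      ⟨y, hβ.equiv.refl y, hyc⟩ ?_ ?_
    · intro z hz
      exact ⟨z, hz, hα.equiv.refl z⟩
    · intro hbc
      exact hc (hmeet y c hyc hbc).symm
  have hxA : x ∈ A := hAuniv ▸ Set.mem_univ x
  obtain ⟨b, hb, hbx⟩ := hxA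
  exact ⟨b, hα.equiv.symm hbx, hb⟩

end Surj

end QuandleStruct
namespace QuandleStruct

variable {Q : Type*} {R : Type*} {U : Type*} {V : Type*}

section Transport

/-- Transport a quandle structure along an equivalence. -/
noncomputable def transport (S : QuandleStruct Q) (e : Q ≃ R) : QuandleStruct R where
  act x y := e (S.act (e.symm x) (e.symm y))
  act_bijective x := by
    show Function.Bijective (e ∘ (S.act (e.symm x)) ∘ e.symm)
    exact e.bijective.comp ((S.act_bijective _).comp e.symm.bijective)
  self_distrib a b c := by
    simp only [Equiv.symm_apply_apply]
    rw [S.self_distrib]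
  act_idem a := by simp [S.act_idem]

lemma qiso_transport (S : QuandleStruct Q) (e : Q ≃ R) : S.QIso (S.transport e) := by
  refine ⟨e, fun a b => ?_⟩
  show e (S.act a b) = e (S.act (e.symm (e a)) (e.symm (e b)))
  simp

lemma QIso.trans {S : QuandleStruct Q} {T : QuandleStruct R} {W : QuandleStruct U}
    (h1 : S.QIso T) (h2 : T.QIso W) : S.QIso W := by
  obtain ⟨e1, he1⟩ := h1
  obtain ⟨e2, he2⟩ := h2
  exact ⟨e1.trans e2, fun a b => by simp [he1, he2]⟩

lemma QIso.prodCongr {S1 : QuandleStruct Q} {T1 : QuandleStruct R}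
    {S2 : QuandleStruct U} {T2 : QuandleStruct V}
    (h1 : S1.QIso T1) (h2 : S2.QIso T2) : (S1.prod S2).QIso (T1.prod T2) := by
  obtain ⟨e1, he1⟩ := h1
  obtain ⟨e2, he2⟩ := h2
  exact ⟨Equiv.prodCongr e1 e2, fun a b => Prod.ext (he1 a.1 b.1) (he2 a.2 b.2)⟩

lemma QIso.connected {S : QuandleStruct Q} {T : QuandleStruct R}
    (h : S.QIso T) (hc : S.Connected) : T.Connected := by
  obtain ⟨e, he⟩ := h
  exact connected_of_surj_hom he e.surjective hc

lemma QIso.strictlySimple {S : QuandleStruct Q} {T : QuandleStruct R}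
    (h : S.QIso T) (hs : S.StrictlySimple) : T.StrictlySimple := by
  obtain ⟨e, he⟩ := h
  obtain ⟨x, y, hxy⟩ := hs.1
  constructor
  · exact ⟨e x, e y, fun hxy' => hxy (e.injective hxy')⟩
  intro s hsub hnt
  have hpre : S.IsSubquandle (e ⁻¹' s) := by
    obtain ⟨z, hz⟩ := hsub.1
    refine ⟨⟨e.symm z, by simp [hz]⟩, ?_⟩
    intro a ha b hb
    constructor
    · show e (S.act a b) ∈ s
      rw [he a b]
      exact (hsub.2 _ ha _ hb).1
    · show e (S.ldiv a b) ∈ s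
      rw [IsHom.ldiv_map he a b]
      exact (hsub.2 _ ha _ hb).2
  have hprent : (e ⁻¹' s).Nontrivial := by
    obtain ⟨u, hu, v, hv, huv⟩ := hnt
    exact ⟨e.symm u, by simp [hu], e.symm v, by simp [hv],
      fun hc => huv (by simpa using congrArg e hc)⟩
  have := hs.2 (e ⁻¹' s) hpre hprent
  rw [Set.eq_univ_iff_forall]
  intro w
  have : e.symm w ∈ e ⁻¹' s := this ▸ Set.mem_univ _
  simpa using this

end Transport

end QuandleStruct
namespace QuandleStruct

/-- From subdirect reducibility on a finite quandle, extract two nontrivial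
congruences intersecting trivially. -/
lemma exists_cong_pair {Q : Type u} [Finite Q] (S : QuandleStruct Q) (hQ : Nontrivial Q)
    (hred : ¬ S.SubdirectlyIrreducible) :
    ∃ α β : Q → Q → Prop, S.IsCongruence α ∧ S.IsCongruence β ∧
      (∃ x y, α x y ∧ x ≠ y) ∧ (∃ x y, β x y ∧ x ≠ y) ∧
      (∀ x y, α x y → β x y → x = y) := by
  classical
  let size : (Q → Q → Prop) → ℕ := fun r => Set.ncard {p : Q × Q | r p.1 p.2}
  let T : Set ℕ := {n | ∃ r : Q → Q → Prop, S.IsCongruence r ∧ (r ≠ fun a b => a = b) ∧ size r = n}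
  have htopc : S.IsCongruence (fun _ _ : Q => True) :=
    ⟨⟨fun _ => trivial, fun _ => trivial, fun _ _ => trivial⟩,
      fun _ _ => trivial, fun _ _ => trivial⟩
  have htopne : (fun _ _ : Q => True) ≠ fun a b => a = b := by
    intro h
    obtain ⟨x, y, hxy⟩ := hQ
    exact hxy (Eq.mp (congrFun (congrFun h x) y) trivial)
  have hTne : T.Nonempty := ⟨size (fun _ _ => True), ⟨_, htopc, htopne, rfl⟩⟩
  obtain ⟨α, hαc, hαne, hαsize⟩ := Nat.sInf_mem hTne
  have hα0 : ∃ x y, α x y ∧ x ≠ y := exists_pair_of_ne_eq hαc.equiv.refl hαne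
  -- find β not above α
  have hβex : ∃ β : Q → Q → Prop, S.IsCongruence β ∧ (β ≠ fun a b => a = b) ∧
      ∃ u v, α u v ∧ ¬ β u v := by
    by_contra h
    push_neg at h
    apply hred
    obtain ⟨x, y, hαxy, hne⟩ := hα0
    exact ⟨x, y, hne, fun r hrc hr0 => h r hrc hr0 x y hαxy⟩
  obtain ⟨β, hβc, hβne, u, v, hαuv, hβuv⟩ := hβex
  refine ⟨α, β, hαc, hβc, hα0, exists_pair_of_ne_eq hβc.equiv.refl hβne, ?_⟩
  by_contra h
  push_neg at h
  obtain ⟨x, y, hαxy, hβxy, hxy⟩ := h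
  -- the meet γ is a nontrivial congruence below α, hence equals α by minimality
  set γ : Q → Q → Prop := fun a b => α a b ∧ β a b with hγ
  have hγc : S.IsCongruence γ :=
    ⟨⟨fun a => ⟨hαc.equiv.refl a, hβc.equiv.refl a⟩,
      fun h => ⟨hαc.equiv.symm h.1, hβc.equiv.symm h.2⟩,
      fun h1 h2 => ⟨hαc.equiv.trans h1.1 h2.1, hβc.equiv.trans h1.2 h2.2⟩⟩,
      fun h1 h2 => ⟨hαc.act_comp h1.1 h2.1, hβc.act_comp h1.2 h2.2⟩,
      fun h1 h2 => ⟨hαc.ldiv_comp h1.1 h2.1, hβc.ldiv_comp h1.2 h2.2⟩⟩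
  have hγne : γ ≠ fun a b => a = b := ne_eq_of_pair ⟨hαxy, hβxy⟩ hxy
  have hγT : size γ ∈ T := ⟨γ, hγc, hγne, rfl⟩
  have hle : size α ≤ size γ := hαsize ▸ Nat.sInf_le hγT
  have hsub : {p : Q × Q | γ p.1 p.2} ⊆ {p : Q × Q | α p.1 p.2} := fun p hp => hp.1
  have hseteq : {p : Q × Q | γ p.1 p.2} = {p : Q × Q | α p.1 p.2} := by
    by_contra hne
    have hss : {p : Q × Q | γ p.1 p.2} ⊂ {p : Q × Q | α p.1 p.2} := ⟨hsub, fun h => hne (hsub.antisymm h)⟩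
    exact absurd (Set.ncard_lt_ncard hss (Set.toFinite _)) (not_lt.2 hle)
  apply hβuv
  have : (u, v) ∈ {p : Q × Q | γ p.1 p.2} := hseteq ▸ hαuv
  exact this.2

end QuandleStruct
/-- A finite connected LSS quandle with more than one element
that is subdirectly reducible is a direct product of two connected strictly
simple quandles. -/
theorem statement10 {Q : Type u} [Finite Q] (S : QuandleStruct Q)
    (hQ : Nontrivial Q) (hconn : S.Connected) (hlss : S.LSS)
    (hred : ¬ S.SubdirectlyIrreducible) :
    ∃ (M N : Type) (SM : QuandleStruct M) (SN : QuandleStruct N),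
      SM.Connected ∧ SM.StrictlySimple ∧ SN.Connected ∧ SN.StrictlySimple ∧
      S.QIso (SM.prod SN) := by
  classical
  obtain ⟨α, β, hαc, hβc, hα0, hβ0, hmeet⟩ :=
    QuandleStruct.exists_cong_pair S hQ hred
  obtain ⟨x0, y0, hαp, hαn⟩ := hα0
  obtain ⟨x1, y1, hβp, hβn⟩ := hβ0
  have hαne : α ≠ fun a b => a = b := QuandleStruct.ne_eq_of_pair hαp hαn
  have hβne : β ≠ fun a b => a = b := QuandleStruct.ne_eq_of_pair hβp hβn
  have hα1 : α ≠ fun _ _ => True := by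
    intro h
    exact hβn (hmeet x1 y1 (by rw [h]; trivial) hβp)
  have hβ1 : β ≠ fun _ _ => True := by
    intro h
    exact hαn (hmeet x0 y0 hαp (by rw [h]; trivial))
  -- the two quotients
  have hconnA := QuandleStruct.quot_connected hαc hconn
  have hconnB := QuandleStruct.quot_connected hβc hconn
  have hssA := QuandleStruct.quot_strictlySimple hαc hconn hlss hαne hα1
  have hssB := QuandleStruct.quot_strictlySimple hβc hconn hlss hβne hβ1
  -- the isomorphism with the product of the quotients
  let f : Q → Quotient hαc.setoid × Quotient hβc.setoid :=
    fun z => (Quotient.mk hαc.setoid z, Quotient.mk hβc.setoid z)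
  have hfbij : Function.Bijective f := by
    constructor
    · intro a b hab
      have h1 : α a b := Quotient.exact (congrArg Prod.fst hab)
      have h2 : β a b := Quotient.exact (congrArg Prod.snd hab)
      exact hmeet a b h1 h2
    · rintro ⟨u, v⟩
      obtain ⟨x, rfl⟩ := QuandleStruct.quot_mk_surjective hαc u
      obtain ⟨y, rfl⟩ := QuandleStruct.quot_mk_surjective hβc v
      obtain ⟨z, hz1, hz2⟩ := QuandleStruct.classes_meet hαc hβc hconn hlss
        ⟨x0, y0, hαp, hαn⟩ ⟨x1, y1, hβp, hβn⟩ hmeet x y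
      exact ⟨z, Prod.ext (Quotient.sound (hαc.equiv.symm hz1))
        (Quotient.sound (hβc.equiv.symm hz2))⟩
  have iso0 : S.QIso ((S.quot hαc).prod (S.quot hβc)) :=
    ⟨Equiv.ofBijective f hfbij, fun a b => rfl⟩
  -- transport to `Type 0`
  haveI : Finite (Quotient hαc.setoid) := Quotient.finite _
  haveI : Finite (Quotient hβc.setoid) := Quotient.finite _
  let eA := Finite.equivFin (Quotient hαc.setoid)
  let eB := Finite.equivFin (Quotient hβc.setoid)
  refine ⟨_, _, (S.quot hαc).transport eA, (S.quot hβc).transport eB,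
    ((S.quot hαc).qiso_transport eA).connected hconnA,
    ((S.quot hαc).qiso_transport eA).strictlySimple hssA,
    ((S.quot hβc).qiso_transport eB).connected hconnB,
    ((S.quot hβc).qiso_transport eB).strictlySimple hssB,
    iso0.trans (QuandleStruct.QIso.prodCongr
      ((S.quot hαc).qiso_transport eA) ((S.quot hβc).qiso_transport eB))⟩
end
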